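/- arXiv:1101.0777 — 4 statements merged into one kernel-verified Lean document; each statement's English description precedes it below -/
import Mathlib

section
/- If a square integer matrix M contains a square submatrix in which every row sum and every column sum is even but the total sum of all entries of the submatrix is not divisible by 4, then M is not totally unimodular. -/
/-!
Total unimodularity yields a signing `ε ∈ {±1}ᵏ` of the columns of the Eulerian submatrix `A`
with `A ε = 0`. Writing `cⱼ` for the (even) column sums, the total sum is
`∑ⱼ cⱼ = ∑ⱼ cⱼ (1 - εⱼ)`, and every term is `0` or `2 cⱼ`, hence divisible by `4`.

The signing is built greedily. If a set `S` of columns has even row sums, every square submatrix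
whose columns are exactly `S` has even determinant, hence determinant `0`. So a nonsingular
square submatrix `A[ρ, κ]` with columns in `S` of maximal size misses a column `j₀ ∈ S`, and
appending any row `i` and the column `j₀` gives a singular matrix. Expanding its determinant along
row `i` shows that the cofactor vector `z` of that row, which does not depend on `i`, satisfies
`A z = 0`; it is a nonzero `{0, ±1}` vector supported on `S`. Mod `2`, `z` is the indicator of its
support, so the columns of `S` where `z` vanishes again have even row sums, and we recurse on them.
-/

open Finset

lemma Function.Injective.sum_mul_extend_zero {ι n R : Type*} [Fintype ι] [Fintype n]
    [NonUnitalNonAssocSemiring R] {κ : ι → n} (hκ : κ.Injective) (a : n → R) (z : ι → R) :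
    ∑ j, a j * Function.extend κ z 0 j = ∑ t, a (κ t) * z t := by
  classical
  rw [← sum_subset (subset_univ (univ.map ⟨κ, hκ⟩)), sum_map]
  · simp [hκ.extend_apply]
  · intro j _ hj
    rw [Function.extend_apply' _ _ _ (by simpa using hj), Pi.zero_apply, mul_zero]

lemma even_sum_filter_eq_zero {ι : Type*} {S : Finset ι} {a z : ι → ℤ}
    (hz : ∀ j, z j ∈ Set.range SignType.cast) (ha : Even (∑ j ∈ S, a j))
    (haz : ∑ j ∈ S, a j * z j = 0) : Even (∑ j ∈ S with z j = 0, a j) := by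
  have key : ∑ j ∈ S with z j = 0, a j =
      ∑ j ∈ S, a j - ∑ j ∈ S, a j * z j - 2 * ∑ j ∈ S with z j = -1, a j := by
    simp only [sum_filter, mul_sum, ← sum_sub_distrib]
    refine sum_congr rfl fun j _ => ?_
    obtain ⟨s, hs⟩ := hz j
    cases s <;> simp [← hs, two_mul]
  rw [key, haz, sub_zero]
  exact ha.sub (even_two_mul _)

namespace Matrix

variable {m n R : Type*}

lemma even_det_of_forall_even_sum_row {ι : Type*} [Fintype ι] [DecidableEq ι] [Nonempty ι]
    (N : Matrix ι ι ℤ) (h : ∀ i, Even (∑ j, N i j)) : Even N.det := by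
  have hker : (Int.castRingHom (ZMod 2)).mapMatrix N *ᵥ (fun _ => 1) = 0 := by
    ext i
    simpa [mulVec, dotProduct, ← ZMod.intCast_eq_zero_iff_even] using h i
  rw [← ZMod.intCast_eq_zero_iff_even, ← eq_intCast (Int.castRingHom _), RingHom.map_det,
    ← exists_mulVec_eq_zero_iff]
  exact ⟨_, Function.ne_iff.mpr ⟨Classical.arbitrary ι, one_ne_zero⟩, hker⟩

lemma IsTotallyUnimodular.det_eq_zero_of_forall_even_sum_row {ι : Type*} [Fintype ι]
    [DecidableEq ι] [Nonempty ι] {A : Matrix m n ℤ} (hA : A.IsTotallyUnimodular) (ρ : ι → m)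
    (κ : ι → n) (h : ∀ u, Even (∑ t, A (ρ u) (κ t))) : (A.submatrix ρ κ).det = 0 := by
  obtain ⟨s, hs⟩ := (isTotallyUnimodular_iff_fintype A).mp hA ι ρ κ
  have heven := even_det_of_forall_even_sum_row (A.submatrix ρ κ) h
  rw [← hs] at heven ⊢
  cases s <;> simp [parity_simps] at heven ⊢

section Cofactor

variable [CommRing R]

def snocRowCofactor {p : ℕ} (A : Matrix m n R) (ρ : Fin p → m) (κ : Fin (p + 1) → n)
    (t : Fin (p + 1)) : R :=
  (-1) ^ (p + t : ℕ) * (A.submatrix ρ (κ ∘ t.succAbove)).det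

lemma det_submatrix_snoc {p : ℕ} (A : Matrix m n R) (ρ : Fin p → m) (i : m)
    (κ : Fin (p + 1) → n) :
    (A.submatrix (Fin.snoc ρ i) κ).det = ∑ t, A i (κ t) * A.snocRowCofactor ρ κ t := by
  rw [det_succ_row _ (Fin.last p)]
  refine sum_congr rfl fun t _ => ?_
  simp only [snocRowCofactor, submatrix_apply, Fin.snoc_last, submatrix_submatrix,
    Fin.succAbove_last, Fin.snoc_comp_castSucc, Fin.val_last]
  ring

lemma snocRowCofactor_last {p : ℕ} (A : Matrix m n R) (ρ : Fin p → m) (κ : Fin (p + 1) → n) :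
    A.snocRowCofactor ρ κ (Fin.last p) = (A.submatrix ρ (κ ∘ Fin.castSucc)).det := by
  simp [snocRowCofactor, ← two_mul]

lemma IsTotallyUnimodular.snocRowCofactor_mem {p : ℕ} {A : Matrix m n R}
    (hA : A.IsTotallyUnimodular) (ρ : Fin p → m) (κ : Fin (p + 1) → n) (t : Fin (p + 1)) :
    A.snocRowCofactor ρ κ t ∈ Set.range SignType.cast := by
  obtain ⟨s, hs⟩ := (isTotallyUnimodular_iff A).mp hA _ ρ (κ ∘ t.succAbove)
  rcases neg_one_pow_eq_or R (p + t) with h | h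
  · exact ⟨s, by rw [snocRowCofactor, h, one_mul, hs]⟩
  · exact ⟨-s, by rw [snocRowCofactor, h, SignType.coe_neg, hs, neg_one_mul]⟩

end Cofactor

variable [Fintype n]

lemma IsTotallyUnimodular.exists_ne_zero_mulVec_eq_zero {A : Matrix m n ℤ}
    (hA : A.IsTotallyUnimodular) {S : Finset n} (hS : S.Nonempty)
    (heven : ∀ i, Even (∑ j ∈ S, A i j)) :
    ∃ z : n → ℤ, z ≠ 0 ∧ (∀ j, z j ∈ Set.range SignType.cast) ∧ (∀ j ∉ S, z j = 0) ∧
      A *ᵥ z = 0 := by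
  classical
  let P : ℕ → Prop := fun p => ∃ (ρ : Fin p → m) (κ : Fin p → n), κ.Injective ∧
    (∀ t, κ t ∈ S) ∧ (A.submatrix ρ κ).det ≠ 0
  have hP0 : P 0 := ⟨Fin.elim0, Fin.elim0, fun a => a.elim0, fun a => a.elim0, by simp⟩
  set p := Nat.findGreatest P #S
  obtain ⟨ρ, κ, hκ, hκS, hdet⟩ : P p := Nat.findGreatest_spec (Nat.zero_le _) hP0
  have hcard : #(univ.image κ) = p := by simp [card_image_of_injective _ hκ]
  have himage : univ.image κ ⊆ S := by simpa [image_subset_iff] using hκS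
  have hp : p < #S := by
    refine (hcard ▸ card_le_card himage).lt_of_ne fun hpS => hdet ?_
    have : Nonempty (Fin p) := Fin.pos_iff_nonempty.mp (hpS ▸ hS.card_pos)
    refine hA.det_eq_zero_of_forall_even_sum_row ρ κ fun u => ?_
    rw [← sum_image fun a _ b _ hab => hκ hab, eq_of_subset_of_card_le himage (hcard.trans hpS).ge]
    exact heven (ρ u)
  obtain ⟨j₀, hj₀S, hj₀⟩ := exists_mem_notMem_of_card_lt_card (hcard ▸ hp)
  set κ' : Fin (p + 1) → n := Fin.snoc κ j₀
  have hκ' : κ'.Injective := Fin.snoc_injective_of_injective hκ (by simpa using hj₀)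
  have hκ'S : ∀ t, κ' t ∈ S := Fin.lastCases (by simpa [κ'] using hj₀S) (by simpa [κ'] using hκS)
  have hsing : ∀ i, (A.submatrix (Fin.snoc ρ i : Fin (p + 1) → m) κ').det = 0 := fun i =>
    by_contra fun h => Nat.findGreatest_is_greatest (lt_add_one p) hp ⟨_, κ', hκ', hκ'S, h⟩
  refine ⟨Function.extend κ' (A.snocRowCofactor ρ κ') 0, fun h => hdet ?_, fun j => ?_,
    fun j hj => ?_, ?_⟩
  · have := congrFun h (κ' (Fin.last p))
    rwa [Pi.zero_apply, hκ'.extend_apply, snocRowCofactor_last, Fin.snoc_comp_castSucc] at this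
  · by_cases hj : ∃ t, κ' t = j
    · obtain ⟨t, rfl⟩ := hj
      rw [hκ'.extend_apply]
      exact hA.snocRowCofactor_mem ρ κ' t
    · exact ⟨0, by rw [Function.extend_apply' _ _ _ hj]; rfl⟩
  · exact Function.extend_apply' _ _ _ fun ⟨t, ht⟩ => hj (ht ▸ hκ'S t)
  · ext i
    rw [mulVec, dotProduct, hκ'.sum_mul_extend_zero, ← det_submatrix_snoc, hsing, Pi.zero_apply]

theorem IsTotallyUnimodular.exists_signing_of_forall_even_sum_row {A : Matrix m n ℤ}
    (hA : A.IsTotallyUnimodular) (S : Finset n) (heven : ∀ i, Even (∑ j ∈ S, A i j)) :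
    ∃ ε : n → ℤ, (∀ j, ε j = 1 ∨ ε j = -1) ∧ ∀ i, ∑ j ∈ S, A i j * ε j = 0 := by
  induction S using Finset.strongInduction with
  | H S ih =>
    obtain rfl | hS := S.eq_empty_or_nonempty
    · exact ⟨1, fun _ => Or.inl rfl, fun _ => sum_empty⟩
    obtain ⟨z, hz0, hz, hzS, hker⟩ := hA.exists_ne_zero_mulVec_eq_zero hS heven
    have hkerS : ∀ i, ∑ j ∈ S, A i j * z j = 0 := fun i => by
      rw [sum_subset (subset_univ S) fun j _ hj => by rw [hzS j hj, mul_zero]]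
      exact congrFun hker i
    have hssub : S.filter (z · = 0) ⊂ S := by
      obtain ⟨j, hj⟩ := Function.ne_iff.mp hz0
      exact filter_ssubset.mpr ⟨j, by_contra fun h => hj (hzS j h), hj⟩
    obtain ⟨ε, hε, hεker⟩ := ih _ hssub fun i => even_sum_filter_eq_zero hz (heven i) (hkerS i)
    refine ⟨fun j => if z j = 0 then ε j else z j, fun j => ?_, fun i => ?_⟩
    · dsimp only
      split_ifs with hj
      · exact hε j
      · obtain ⟨s, hs⟩ := hz j
        cases s <;> simp_all [← hs]
    · have : ∀ j, A i j * (if z j = 0 then ε j else z j) =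
          A i j * z j + if z j = 0 then A i j * ε j else 0 := fun j => by split_ifs <;> simp_all
      simp only [this, sum_add_distrib, ← sum_filter, hkerS, hεker, add_zero]

lemma four_dvd_sum_of_even_sum_col [Fintype m] {A : Matrix m n ℤ}
    (hcol : ∀ j, Even (∑ i, A i j)) {ε : n → ℤ} (hε : ∀ j, ε j = 1 ∨ ε j = -1)
    (hker : ∀ i, ∑ j, A i j * ε j = 0) : 4 ∣ ∑ i, ∑ j, A i j := by
  have hsigned : ∑ j, (∑ i, A i j) * ε j = 0 := by
    simp only [sum_mul]
    rw [sum_comm]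
    exact sum_eq_zero fun i _ => hker i
  have hsplit : ∑ i, ∑ j, A i j = ∑ j, (∑ i, A i j) * (1 - ε j) := by
    simp only [mul_sub, mul_one, sum_sub_distrib, hsigned, sub_zero]
    exact sum_comm
  rw [hsplit]
  refine dvd_sum fun j _ => ?_
  obtain ⟨c, hc⟩ := hcol j
  rcases hε j with h | h <;> rw [h]
  · simp
  · exact ⟨c, by rw [hc]; ring⟩

end Matrix

theorem camion_necessary_general {n k : ℕ} (M : Matrix (Fin n) (Fin n) ℤ)
    (f g : Fin k → Fin n)
    (hrow : ∀ i : Fin k, Even (∑ j : Fin k, M (f i) (g j)))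
    (hcol : ∀ j : Fin k, Even (∑ i : Fin k, M (f i) (g j)))
    (hsum : ¬ (4 : ℤ) ∣ ∑ i : Fin k, ∑ j : Fin k, M (f i) (g j)) :
    ¬ M.IsTotallyUnimodular := fun hM => by
  obtain ⟨ε, hε, hker⟩ := (hM.submatrix f g).exists_signing_of_forall_even_sum_row univ hrow
  exact hsum (Matrix.four_dvd_sum_of_even_sum_col (A := M.submatrix f g) hcol hε hker)

/-- If a square integer matrix `M` contains a square submatrix
(selected by injective row/column maps `f`, `g`) in which every row sum and every
column sum is even but the total sum of its entries is not divisible by `4`,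
then `M` is not totally unimodular (Camion's criterion, one direction). -/
theorem camion_necessary {n k : ℕ} (M : Matrix (Fin n) (Fin n) ℤ)
    (f g : Fin k → Fin n) (hf : Function.Injective f) (hg : Function.Injective g)
    (hrow : ∀ i : Fin k, Even (∑ j : Fin k, M (f i) (g j)))
    (hcol : ∀ j : Fin k, Even (∑ i : Fin k, M (f i) (g j)))
    (hsum : ¬ (4 : ℤ) ∣ ∑ i : Fin k, ∑ j : Fin k, M (f i) (g j)) :
    ¬ M.IsTotallyUnimodular :=
  camion_necessary_general M f g hrow hcol hsum
end

section
/- Let T1 and T2 be two triangles in ℝ³ sharing an edge e of length |e|, with dihedral angle θ between them (measured so that θ = π when the triangles are coplanar with consistent orientation), and let N_e be the unit vector in the direction of the half-sum of the two unit normals. Then the vector (1/2)(J1 e + J2 e) has norm |e| cos(θ/2) and direction N_e, i.e., (1/2)(J1 e + J2 e) = |e| cos(θ/2) N_e, assuming the two normals are not opposite. -/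
/-!
`J1 e + J2 e = N1 × e + e × N2 = (N1 - N2) × e`. As `N1 - N2 ⊥ e`, this vector has norm
`‖N1 - N2‖ ‖e‖ = 2 cos (θ/2) ‖e‖`. The bisector `N1 + N2` is orthogonal to `e` and, the normals
having equal length, to `N1 - N2`; so it is parallel to `(N1 - N2) × e`, and the sign condition
makes the two point the same way.
-/

/-- The cross product in `ℝ³` (as `EuclideanSpace ℝ (Fin 3)`). -/
noncomputable def cross3 (u v : EuclideanSpace ℝ (Fin 3)) : EuclideanSpace ℝ (Fin 3) :=
  (WithLp.equiv 2 (Fin 3 → ℝ)).symm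
    ![u 1 * v 2 - u 2 * v 1, u 2 * v 0 - u 0 * v 2, u 0 * v 1 - u 1 * v 0]

open Matrix WithLp Real
open scoped RealInnerProductSpace

theorem EuclideanSpace.real_inner_eq_dotProduct {ι : Type*} [Fintype ι]
    (x y : EuclideanSpace ℝ ι) : ⟪x, y⟫ = ofLp x ⬝ᵥ ofLp y := by
  rw [EuclideanSpace.inner_eq_star_dotProduct, star_trivial, dotProduct_comm]

theorem norm_sub_eq_two_mul_cos_half {F : Type*} [NormedAddCommGroup F] [InnerProductSpace ℝ F]
    {x y : F} {θ : ℝ} (hx : ‖x‖ = 1) (hy : ‖y‖ = 1) (hθ : θ ∈ Set.Icc 0 π)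
    (hcos : cos θ = -⟪x, y⟫) : ‖x - y‖ = 2 * cos (θ / 2) := by
  have hcos_half : 0 ≤ cos (θ / 2) :=
    cos_nonneg_of_mem_Icc ⟨by linarith [hθ.1, pi_pos], by linarith [hθ.2]⟩
  refine (sq_eq_sq₀ (norm_nonneg _) (by positivity)).1 ?_
  rw [norm_sub_sq_real, hx, hy, mul_pow, cos_sq, mul_div_cancel₀ θ two_ne_zero]
  linear_combination -2 * hcos

section cross3

variable (a b c d : EuclideanSpace ℝ (Fin 3))

theorem cross3_eq_toLp : cross3 a b = toLp 2 (ofLp a ⨯₃ ofLp b) := rfl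

theorem cross3_sub_left : cross3 (a - b) c = cross3 a c - cross3 b c := by
  simp only [cross3_eq_toLp, ofLp_sub, map_sub, LinearMap.sub_apply, toLp_sub]

theorem cross3_anticomm : -cross3 a b = cross3 b a := by
  simp only [cross3_eq_toLp, ← toLp_neg, cross_anticomm]

theorem real_inner_cross3_cross3 :
    ⟪cross3 a b, cross3 c d⟫ = ⟪a, c⟫ * ⟪b, d⟫ - ⟪a, d⟫ * ⟪b, c⟫ := by
  simp only [EuclideanSpace.real_inner_eq_dotProduct, cross3_eq_toLp]
  exact cross_dot_cross _ _ _ _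

theorem cross3_cross3 : cross3 (cross3 a b) c = ⟪a, c⟫ • b - ⟪b, c⟫ • a := by
  simp only [EuclideanSpace.real_inner_eq_dotProduct, cross3_eq_toLp,
    cross_cross_eq_smul_sub_smul, toLp_sub, toLp_smul, toLp_ofLp]

theorem norm_cross3_sq : ‖cross3 a b‖ ^ 2 = ‖a‖ ^ 2 * ‖b‖ ^ 2 - ⟪a, b⟫ ^ 2 := by
  simp only [← real_inner_self_eq_norm_sq, real_inner_cross3_cross3, real_inner_comm b a]
  ring

variable {a b c}

theorem norm_cross3_of_inner_eq_zero (h : ⟪a, b⟫ = 0) : ‖cross3 a b‖ = ‖a‖ * ‖b‖ :=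
  (sq_eq_sq₀ (norm_nonneg _) (by positivity)).1 (by rw [norm_cross3_sq, h]; ring)

theorem real_inner_cross3_eq_norm_mul_norm (ha : ⟪a, c⟫ = 0) (hb : ⟪b, c⟫ = 0)
    (hc : 0 ≤ ⟪cross3 a b, c⟫) : ⟪cross3 a b, c⟫ = ‖cross3 a b‖ * ‖c‖ := by
  have hparallel : cross3 (cross3 a b) c = 0 := by simp [cross3_cross3, ha, hb]
  have h := norm_cross3_sq (cross3 a b) c
  rw [hparallel, norm_zero] at h
  exact (sq_eq_sq₀ hc (by positivity)).1 (by linear_combination h)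

end cross3

-- `J1 v = N1 × v` and `J2 v = v × N2`; `hsign` fixes the relative orientation of the two triangles.
theorem area_gradient_eq_discrete_mean_curvature_general
    (e N1 N2 : EuclideanSpace ℝ (Fin 3)) (θ : ℝ)
    (hN1 : ‖N1‖ = 1) (hN2 : ‖N2‖ = 1)
    (h1 : (inner ℝ N1 e : ℝ) = 0) (h2 : (inner ℝ N2 e : ℝ) = 0)
    (hopp : N1 + N2 ≠ 0)
    (hθ : θ ∈ Set.Icc (0 : ℝ) Real.pi)
    (hcos : Real.cos θ = -(inner ℝ N1 N2 : ℝ))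
    (hsign : 0 ≤ (inner ℝ (cross3 N1 e + cross3 e N2) (N1 + N2) : ℝ)) :
    (1 / 2 : ℝ) • (cross3 N1 e + cross3 e N2)
      = (‖e‖ * Real.cos (θ / 2)) • (‖N1 + N2‖⁻¹ • (N1 + N2)) := by
  have hw : cross3 N1 e + cross3 e N2 = cross3 (N1 - N2) e := by
    rw [cross3_sub_left, ← cross3_anticomm N2 e, sub_eq_add_neg]
  have hdiff_e : ⟪N1 - N2, e⟫ = 0 := by rw [inner_sub_left, h1, h2, sub_zero]
  have hdiff_sum : ⟪N1 - N2, N1 + N2⟫ = 0 := by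
    rw [real_inner_comm, real_inner_add_sub_eq_zero_iff, hN1, hN2]
  have he_sum : ⟪e, N1 + N2⟫ = 0 := by rw [real_inner_comm, inner_add_left, h1, h2, add_zero]
  rw [hw] at hsign ⊢
  have hparallel : ‖N1 + N2‖ • cross3 (N1 - N2) e = ‖cross3 (N1 - N2) e‖ • (N1 + N2) :=
    inner_eq_norm_mul_iff_real.1 (real_inner_cross3_eq_norm_mul_norm hdiff_sum he_sum hsign)
  have hnorm : ‖cross3 (N1 - N2) e‖ = 2 * cos (θ / 2) * ‖e‖ := by
    rw [norm_cross3_of_inner_eq_zero hdiff_e, norm_sub_eq_two_mul_cos_half hN1 hN2 hθ hcos]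
  rw [hnorm, ← eq_inv_smul_iff₀ (norm_ne_zero_iff.2 hopp)] at hparallel
  rw [hparallel, smul_smul, smul_smul, smul_smul]
  congr 1
  ring

/-- Let `e` be the shared oriented edge of two triangles with unit
normals `N1`, `N2` orthogonal to `e`, not opposite to each other, and let `θ` be the
dihedral angle (`θ = π` for a flat configuration, so `cos θ = -⟨N1,N2⟩`). Then the
area-gradient vector `(1/2)(J1 e + J2 e)` (with `J1 v = N1 × v`, `J2 v = v × N2`,
the sign convention fixed by `hsign`) equals `|e| cos(θ/2) N_e`, where
`N_e = (N1 + N2)/‖N1 + N2‖` is the angle-bisecting unit normal. -/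
theorem area_gradient_eq_discrete_mean_curvature
    (e N1 N2 : EuclideanSpace ℝ (Fin 3)) (θ : ℝ)
    (he : e ≠ 0) (hN1 : ‖N1‖ = 1) (hN2 : ‖N2‖ = 1)
    (h1 : (inner ℝ N1 e : ℝ) = 0) (h2 : (inner ℝ N2 e : ℝ) = 0)
    (hopp : N1 + N2 ≠ 0)
    (hθ : θ ∈ Set.Icc (0 : ℝ) Real.pi)
    (hcos : Real.cos θ = -(inner ℝ N1 N2 : ℝ))
    (hsign : 0 ≤ (inner ℝ (cross3 N1 e + cross3 e N2) (N1 + N2) : ℝ)) :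
    (1 / 2 : ℝ) • (cross3 N1 e + cross3 e N2)
      = (‖e‖ * Real.cos (θ / 2)) • (‖N1 + N2‖⁻¹ • (N1 + N2)) :=
  area_gradient_eq_discrete_mean_curvature_general e N1 N2 θ hN1 hN2 h1 h2 hopp hθ hcos hsign
end

section
/- There exists a {-1,0,1}-matrix with exactly two -1 entries per column for some columns and exactly three +1 entries per column for other columns that is not totally unimodular. -/
/-!
The three edge columns of a triangle, each carrying two `-1` entries, form the negated incidence
matrix of an odd cycle, whose determinant is `-2`. Putting an all-ones column in front of them
gives a matrix of the required shape with a square submatrix of determinant outside `{-1, 0, 1}`.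
-/

open Matrix

theorem Matrix.IsTotallyUnimodular.det_mem_range {ι R : Type*} [Fintype ι] [DecidableEq ι]
    [CommRing R] {A : Matrix ι ι R} (hA : A.IsTotallyUnimodular) :
    A.det ∈ Set.range SignType.cast := by
  simpa using (isTotallyUnimodular_iff_fintype A).1 hA ι id id

theorem Matrix.not_isTotallyUnimodular_of_two_le_abs_det {ι R : Type*} [Fintype ι]
    [DecidableEq ι] [CommRing R] [LinearOrder R] [IsStrictOrderedRing R] {A : Matrix ι ι R}
    (hA : 2 ≤ |A.det|) : ¬ A.IsTotallyUnimodular := by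
  intro hTU
  obtain ⟨σ, hσ⟩ := hTU.det_mem_range
  have habs : |A.det| ≤ 1 := by
    rw [← hσ]
    cases σ <;> simp
  linarith

def negTriangleIncidence : Matrix (Fin 3) (Fin 3) ℤ :=
  of fun v e => if v = e ∨ v = e + 1 then -1 else 0

theorem det_negTriangleIncidence : negTriangleIncidence.det = -2 := by
  decide

def negTriangleIncidenceWithOnes : Matrix (Fin 3) (Fin 4) ℤ :=
  of fun v => Fin.cons 1 (negTriangleIncidence v)

theorem negTriangleIncidenceWithOnes_col_zero :
    ∃ s : Finset (Fin 3), s.card = 3 ∧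
      ∀ i, negTriangleIncidenceWithOnes i 0 = if i ∈ s then 1 else 0 :=
  ⟨Finset.univ, rfl, fun _ => by simp [negTriangleIncidenceWithOnes]⟩

theorem negTriangleIncidenceWithOnes_col_succ (e : Fin 3) :
    ∃ s : Finset (Fin 3), s.card = 2 ∧
      ∀ i, negTriangleIncidenceWithOnes i e.succ = if i ∈ s then -1 else 0 := by
  refine ⟨{e, e + 1}, Finset.card_pair ?_, fun i => ?_⟩
  · revert e
    decide
  · simp [negTriangleIncidenceWithOnes, negTriangleIncidence]

theorem not_isTotallyUnimodular_negTriangleIncidenceWithOnes :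
    ¬ negTriangleIncidenceWithOnes.IsTotallyUnimodular := fun hTU =>
  have hsub : negTriangleIncidenceWithOnes.submatrix id Fin.succ = negTriangleIncidence := rfl
  not_isTotallyUnimodular_of_two_le_abs_det (by rw [det_negTriangleIncidence]; norm_num)
    (hsub ▸ hTU.submatrix id Fin.succ)

/-- There exists a `{-1,0,1}`-matrix, each of whose columns is
either zero except for exactly two `-1` entries or zero except for exactly three
`+1` entries (with both kinds of columns occurring), that is not totally
unimodular. -/
theorem exists_triangle_incidence_not_totallyUnimodular :
    ∃ (m n : ℕ) (D : Matrix (Fin m) (Fin n) ℤ),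
      (∀ j : Fin n,
        (∃ s : Finset (Fin m), s.card = 3 ∧ ∀ i, D i j = if i ∈ s then 1 else 0) ∨
        (∃ s : Finset (Fin m), s.card = 2 ∧ ∀ i, D i j = if i ∈ s then -1 else 0)) ∧
      (∃ j : Fin n, ∃ s : Finset (Fin m), s.card = 3 ∧
        ∀ i, D i j = if i ∈ s then 1 else 0) ∧
      (∃ j : Fin n, ∃ s : Finset (Fin m), s.card = 2 ∧
        ∀ i, D i j = if i ∈ s then -1 else 0) ∧
      ¬ D.IsTotallyUnimodular :=
  ⟨3, 4, negTriangleIncidenceWithOnes,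
    Fin.cases (Or.inl negTriangleIncidenceWithOnes_col_zero)
      (fun e => Or.inr (negTriangleIncidenceWithOnes_col_succ e)),
    ⟨0, negTriangleIncidenceWithOnes_col_zero⟩, ⟨1, negTriangleIncidenceWithOnes_col_succ 0⟩,
    not_isTotallyUnimodular_negTriangleIncidenceWithOnes⟩
end

section
/- In the matrix of Table 1 (a 27×27 {-1,0,1}-matrix with specified entries, padded with zero rows to be square), every row sum and every column sum is even, and the total sum of all entries is -42, which is not divisible by 4; hence by Camion's criterion any matrix containing it as a submatrix is not totally unimodular. -/
/-!
The columns of `tableMatrix` have exactly two nonzero entries each, so the matrix is the signed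
incidence matrix of a graph on its rows, and that graph has an odd cycle of length `7`. Ordered
along the cycle, the corresponding `7 × 7` submatrix is `(1 + P) D` with `P` the cyclic shift and
`D` a diagonal sign matrix with `det D = 1`, so its determinant is `det (1 + P) = 1 - (-1) ^ 7 = 2`.
-/

/-- The `27 × 27` matrix of Table 1: rows `0`–`19` are the pairs
`(T₁,e₁),…,(T₈,e₁),(T₁,e₂),(T₉,e₂),…,(T₁₃,e₂),(T₉,e₃),(T₅,e₃),…,(T₁₇,e₃)`,
rows `20`–`26` are zero padding; columns `0,1,2` are the triangles `T₁,T₅,T₉`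
(entries `+1`) and columns `3`–`26` are the quadrangles (entries `-1`). -/
def tableMatrix : Matrix (Fin 27) (Fin 27) ℤ :=
  Matrix.of fun i j =>
    if (i.val, j.val) ∈ [(0, 0), (8, 0), (4, 1), (15, 1), (9, 2), (14, 2)] then 1
    else if (i.val, j.val) ∈
        [(0, 3), (1, 3), (1, 4), (2, 4), (2, 5), (3, 5), (3, 6), (4, 6),
         (1, 7), (4, 7), (4, 8), (5, 8), (0, 9), (5, 9), (0, 10), (6, 10),
         (6, 11), (7, 11), (1, 12), (7, 12), (8, 13), (9, 13), (9, 14), (10, 14),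
         (10, 15), (11, 15), (8, 16), (11, 16), (8, 17), (12, 17), (12, 18), (13, 18),
         (9, 19), (13, 19), (14, 20), (15, 20), (15, 21), (16, 21), (16, 22), (17, 22),
         (14, 23), (17, 23), (14, 24), (18, 24), (18, 25), (19, 25), (15, 26), (19, 26)]
      then -1
    else 0

open Matrix

section CyclicShift

variable {R : Type*} [CommRing R]

lemma Fin.add_one_eq_iff {n : ℕ} (i j : Fin (n + 2)) :
    i + 1 = j ↔ (i : ℕ) + 1 = j ∨ ((i : ℕ) = n + 1 ∧ (j : ℕ) = 0) := by
  rw [Fin.ext_iff, Fin.val_add_one]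
  split_ifs with h <;> rw [Fin.ext_iff, Fin.val_last] at h <;> omega

lemma one_add_finRotate_permMatrix_apply {n : ℕ} (i j : Fin (n + 2)) :
    (1 + (finRotate (n + 2)).permMatrix R) i j =
      (if (i : ℕ) = j then 1 else 0) +
        (if (i : ℕ) + 1 = j ∨ ((i : ℕ) = n + 1 ∧ (j : ℕ) = 0) then 1 else 0) := by
  simp only [Matrix.add_apply, one_apply, PEquiv.toMatrix_apply, Equiv.toPEquiv_apply,
    Option.mem_def, Option.some_inj, finRotate_apply, Fin.add_one_eq_iff]
  simp only [Fin.ext_iff]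

theorem det_one_add_finRotate_permMatrix (n : ℕ) :
    det (1 + (finRotate (n + 2)).permMatrix R) = 1 - (-1) ^ n := by
  set A := 1 + (finRotate (n + 2)).permMatrix R with hA
  have upper : (A.submatrix Fin.succ Fin.succ).IsUpperTriangular := by
    intro i j hji
    simp only [id, Fin.lt_def] at hji
    simp only [submatrix_apply, hA, one_add_finRotate_permMatrix_apply, Fin.val_succ]
    rw [if_neg (by omega), if_neg (by omega), add_zero]
  have lower : (A.submatrix Fin.castSucc Fin.succ).IsLowerTriangular := by
    intro i j hij
    rw [OrderDual.toDual_lt_toDual, Fin.lt_def] at hij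
    simp only [submatrix_apply, hA, one_add_finRotate_permMatrix_apply, Fin.val_succ,
      Fin.val_castSucc]
    rw [if_neg (by omega), if_neg (by omega), add_zero]
  have hupper : (A.submatrix Fin.succ Fin.succ).det = 1 := by
    rw [det_of_isUpperTriangular upper]
    exact Finset.prod_eq_one fun i _ => by simp [hA]
  have hlower : (A.submatrix Fin.castSucc Fin.succ).det = 1 := by
    rw [det_of_isLowerTriangular _ lower]
    exact Finset.prod_eq_one fun i _ => by simp [hA, one_apply, Fin.ext_iff]
  -- Column `0` has its nonzero entries in rows `0` and `last`, whose minors are unitriangular.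
  rw [det_succ_column_zero, Fin.sum_univ_castSucc, Finset.sum_eq_single 0]
  · rw [Fin.castSucc_zero, Fin.succAbove_zero, Fin.succAbove_last, hupper, hlower]
    simp only [hA, one_add_finRotate_permMatrix_apply, Fin.val_zero, Fin.val_last]
    norm_num [pow_succ]
    ring
  · intro i _ hi
    have hi : (i : ℕ) ≠ 0 := Fin.val_ne_iff.mpr hi
    simp only [hA, one_add_finRotate_permMatrix_apply, Fin.val_castSucc, Fin.val_zero]
    simp [hi, i.isLt.ne]
  · simp

end CyclicShift

def oddCycleRows : Fin 7 → Fin 27 := ![0, 1, 4, 15, 14, 9, 8]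

-- column `oddCycleCols i` is the edge joining rows `oddCycleRows (i - 1)` and `oddCycleRows i`
def oddCycleCols : Fin 7 → Fin 27 := ![0, 3, 7, 1, 20, 2, 13]

lemma tableMatrix_submatrix_oddCycle :
    tableMatrix.submatrix oddCycleRows oddCycleCols =
      (1 + (finRotate 7).permMatrix ℤ) * diagonal ![1, -1, -1, 1, -1, 1, -1] := by
  ext i j
  rw [submatrix_apply, mul_diagonal, one_add_finRotate_permMatrix_apply (n := 5)]
  revert i j
  decide

lemma det_tableMatrix_submatrix_oddCycle :
    (tableMatrix.submatrix oddCycleRows oddCycleCols).det = 2 := by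
  rw [tableMatrix_submatrix_oddCycle, det_mul, det_one_add_finRotate_permMatrix, det_diagonal]
  decide

lemma tableMatrix_not_isTotallyUnimodular : ¬ tableMatrix.IsTotallyUnimodular := by
  rw [isTotallyUnimodular_iff]
  intro h
  obtain ⟨s, hs⟩ := h 7 oddCycleRows oddCycleCols
  rw [det_tableMatrix_submatrix_oddCycle] at hs
  cases s <;> simp at hs

/-- In the matrix of Table 1, every row sum and every column sum
is even, the total sum of all entries is `-42`, which is not divisible by `4`;
hence, by Camion's criterion, any matrix containing it as a (sub)matrix is not
totally unimodular. -/
theorem tableMatrix_eulerian_not_div_four :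
    (∀ i, Even (∑ j, tableMatrix i j)) ∧
    (∀ j, Even (∑ i, tableMatrix i j)) ∧
    (∑ i, ∑ j, tableMatrix i j) = -42 ∧
    ¬ (4 : ℤ) ∣ (-42 : ℤ) ∧
    ∀ (m n : ℕ) (M : Matrix (Fin m) (Fin n) ℤ) (f : Fin 27 → Fin m) (g : Fin 27 → Fin n),
      Function.Injective f → Function.Injective g →
      (∀ i j, M (f i) (g j) = tableMatrix i j) →
      ¬ M.IsTotallyUnimodular := by
  refine ⟨by decide, by decide, by decide, by decide, ?_⟩
  intro m n M f g _ _ hMfg hM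
  have hsub : M.submatrix f g = tableMatrix := Matrix.ext hMfg
  exact tableMatrix_not_isTotallyUnimodular (hsub ▸ hM.submatrix f g)
end
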